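/- arXiv:1503.05404 — 5 statements merged into one kernel-verified Lean document; each statement's English description precedes it below -/
import Mathlib

section
/- Let {W_n(x)} satisfy W_n = (a x + b)W_{n-1} + d·W_{n-2} with a > 0, b ≥ 0, d < 0, W_0 = 1, W_1 = x, and let R_n denote the set of real roots of W_n. Fix m ≥ 0 and reals α < β. Suppose W_m(α)W_{m+2}(α) > 0, W_m(β)W_{m+2}(β) > 0, that W_{m+1} has exactly m+1 distinct real roots, all lying in (α, β), and that R_{m+1} interlaces R_m. Then W_{m+2} has exactly m+2 distinct real roots, all lying in (α, β), and R_{m+2} interlaces R_{m+1}. -/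
open Polynomial Finset Function

/-!
At a root `ξ j` of `W (m + 1)` the recurrence reduces to `W (m + 2) = d * W m`. Because the roots
of `W m` interlace the `ξ j`, `W m` alternates in sign along `ξ 0 < ⋯ < ξ m`, hence so does
`W (m + 2)` (as `d < 0`), and the sign hypotheses at `α` and `β` extend this alternation to
`α < ξ 0 < ⋯ < ξ m < β`. The intermediate value theorem then puts a root of `W (m + 2)` in each of
these `m + 2` gaps, and as `W (m + 2)` has degree `m + 2` (since `a > 0`) there are no others.
-/

theorem neg_one_pow_card_filter_neg_mul_prod_pos {R ι : Type*} [CommRing R] [LinearOrder R]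
    [IsStrictOrderedRing R] (s : Finset ι) {f : ι → R} (hf : ∀ i ∈ s, f i ≠ 0) :
    0 < (-1) ^ #{i ∈ s | f i < 0} * ∏ i ∈ s, f i := by
  rw [← prod_filter_mul_prod_filter_not s (fun i => f i < 0), ← mul_assoc, ← prod_neg]
  refine mul_pos (prod_pos fun i hi => neg_pos.2 (mem_filter.1 hi).2)
    (prod_pos fun i hi => ?_)
  obtain ⟨hs, hneg⟩ := mem_filter.1 hi
  exact (not_lt.1 hneg).lt_of_ne' (hf i hs)

theorem pos_mul_of_pos_mul_of_pos_mul {R : Type*} [CommRing R] [LinearOrder R]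
    [IsStrictOrderedRing R] {s u v : R} (hsu : 0 < s * u) (huv : 0 < u * v) : 0 < s * v := by
  have h := mul_pos hsu huv
  rw [show s * u * (u * v) = u ^ 2 * (s * v) by ring] at h
  exact pos_of_mul_pos_right h (sq_nonneg u)

theorem mul_neg_of_neg_one_pow_sub_mul_pos {R : Type*} [CommRing R] [LinearOrder R]
    [IsStrictOrderedRing R] {n : ℕ} {u : Fin (n + 1) → R}
    (hu : ∀ k : Fin (n + 1), 0 < (-1) ^ (n - (k : ℕ)) * u k) (k : Fin n) :
    u k.castSucc * u k.succ < 0 := by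
  have hleft := hu k.castSucc
  rw [show n - k.castSucc = n - k.succ + 1 by simp; omega, pow_succ] at hleft
  have hsq : ((-1 : R) ^ (n - k.succ)) ^ 2 = 1 := by rw [← pow_mul, pow_mul']; simp
  nlinarith [mul_pos hleft (hu k.succ)]

theorem exists_mem_Ioo_eq_zero_of_mul_neg {α R : Type*} [ConditionallyCompleteLinearOrder α]
    [DenselyOrdered α] [TopologicalSpace α] [OrderTopology α] [CommRing R] [LinearOrder R]
    [IsStrictOrderedRing R] [TopologicalSpace R] [OrderClosedTopology R] {f : α → R} {a b : α}
    (hab : a ≤ b) (hf : ContinuousOn f (Set.Icc a b)) (h : f a * f b < 0) :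
    ∃ c ∈ Set.Ioo a b, f c = 0 := by
  rcases mul_neg_iff.1 h with ⟨ha, hb⟩ | ⟨ha, hb⟩
  · exact intermediate_value_Ioo' hab hf ⟨hb, ha⟩
  · exact intermediate_value_Ioo hab hf ⟨ha, hb⟩

theorem exists_strictMono_zeros_of_mul_neg {α R : Type*} [ConditionallyCompleteLinearOrder α]
    [DenselyOrdered α] [TopologicalSpace α] [OrderTopology α] [CommRing R] [LinearOrder R]
    [IsStrictOrderedRing R] [TopologicalSpace R] [OrderClosedTopology R] {f : α → R}
    (hf : Continuous f) {n : ℕ} {t : Fin (n + 1) → α} (ht : StrictMono t)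
    (hsign : ∀ k : Fin n, f (t k.castSucc) * f (t k.succ) < 0) :
    ∃ ζ : Fin n → α, StrictMono ζ ∧ (∀ k, ζ k ∈ Set.Ioo (t k.castSucc) (t k.succ)) ∧
      ∀ k, f (ζ k) = 0 := by
  choose ζ hζ hζ₀ using fun k : Fin n =>
    exists_mem_Ioo_eq_zero_of_mul_neg (ht k.castSucc_lt_succ).le hf.continuousOn (hsign k)
  refine ⟨ζ, fun i j hij => ?_, hζ, hζ₀⟩
  calc ζ i < t i.succ := (hζ i).2
    _ ≤ t j.castSucc := ht.monotone (Fin.succ_le_castSucc_iff.2 hij)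
    _ < ζ j := (hζ j).1

theorem Fin.strictMono_snoc {α : Type*} [Preorder α] {n : ℕ} {f : Fin n → α} {a : α} :
    StrictMono (Fin.snoc f a : Fin (n + 1) → α) ↔ StrictMono f ∧ ∀ i, f i < a := by
  simp [← Fin.insertNth_last', Fin.strictMono_insertNth_iff, Fin.castSucc_lt_last]

namespace Polynomial

theorem eval_eq_leadingCoeff_mul_prod_sub {R : Type*} [CommRing R] [IsDomain R] {n : ℕ}
    {p : R[X]} {η : Fin n → R} (hη : Injective η) (hdeg : p.natDegree = n)
    (hroot : ∀ i, p.IsRoot (η i)) (x : R) :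
    p.eval x = p.leadingCoeff * ∏ i, (x - η i) := by
  rcases eq_or_ne p 0 with rfl | hp
  · simp
  have hroots : p.roots = univ.val.map η := by
    refine (Multiset.eq_of_le_of_card_le ?_ ?_).symm
    · refine (Multiset.le_iff_subset (univ.nodup.map hη)).2 fun y hy => ?_
      obtain ⟨i, -, rfl⟩ := Multiset.mem_map.1 hy
      exact (mem_roots hp).2 (hroot i)
    · simpa [hdeg] using p.card_roots'
  have hcard : Multiset.card p.roots = p.natDegree := by simp [hroots, hdeg]
  conv_lhs => rw [← C_leadingCoeff_mul_prod_multiset_X_sub_C hcard]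
  rw [hroots, Multiset.map_map, ← prod_eq_multiset_prod]
  simp [eval_prod]

theorem neg_one_pow_card_mul_eval_pos {R : Type*} [CommRing R] [LinearOrder R]
    [IsStrictOrderedRing R] {n : ℕ} {p : R[X]} {η : Fin n → R} (hη : Injective η)
    (hdeg : p.natDegree = n) (hlc : 0 < p.leadingCoeff) (hroot : ∀ i, p.IsRoot (η i)) {x : R}
    (hx : ∀ i, x ≠ η i) : 0 < (-1) ^ #{i | x < η i} * p.eval x := by
  have hprod := neg_one_pow_card_filter_neg_mul_prod_pos univ (f := fun i => x - η i)
    fun i _ => sub_ne_zero.2 (hx i)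
  simp only [sub_neg] at hprod
  rw [eval_eq_leadingCoeff_mul_prod_sub hη hdeg hroot, mul_left_comm]
  exact mul_pos hlc hprod

theorem neg_one_pow_sub_mul_eval_pos_of_interlace {m : ℕ} {p : ℝ[X]} (hdeg : p.natDegree = m)
    (hlc : 0 < p.leadingCoeff) {η : Fin m → ℝ} (hη : StrictMono η) (hroot : ∀ i, p.IsRoot (η i))
    {ξ : Fin (m + 1) → ℝ} (hξ : StrictMono ξ)
    (hitl : ∀ i : Fin m, ξ i.castSucc < η i ∧ η i < ξ i.succ) (j : Fin (m + 1)) :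
    0 < (-1) ^ (m - j : ℕ) * p.eval (ξ j) := by
  have hbelow : ∀ i : Fin m, (j : ℕ) ≤ i → ξ j < η i := fun i h =>
    (hξ.monotone (Fin.le_def.2 h : j ≤ i.castSucc)).trans_lt (hitl i).1
  have habove : ∀ i : Fin m, (i : ℕ) < j → η i < ξ j := fun i h =>
    (hitl i).2.trans_le (hξ.monotone (Fin.le_def.2 h : i.succ ≤ j))
  have hcard : #{i : Fin m | ξ j < η i} = m - j := by
    have hsplit := card_filter_add_card_filter_not (s := (univ : Finset (Fin m)))
      (fun i : Fin m => (i : ℕ) < j)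
    simp only [not_lt, card_univ, Fintype.card_fin, Fin.card_filter_val_lt] at hsplit
    rw [filter_congr fun i _ => ⟨fun h => not_lt.1 fun hi => (habove i hi).not_gt h, hbelow i⟩]
    omega
  have hsign := neg_one_pow_card_mul_eval_pos hη.injective hdeg hlc hroot (x := ξ j) fun i =>
    (le_or_gt (j : ℕ) i).elim (fun h => (hbelow i h).ne) fun h => (habove i h).ne'
  rwa [hcard] at hsign

theorem exists_strictMono_roots_of_mul_neg {n : ℕ} {p : ℝ[X]} (hp : p ≠ 0)
    (hdeg : p.natDegree = n) {t : Fin (n + 1) → ℝ} (ht : StrictMono t)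
    (hsign : ∀ k : Fin n, p.eval (t k.castSucc) * p.eval (t k.succ) < 0) :
    ∃ ζ : Fin n → ℝ, StrictMono ζ ∧ (∀ x, p.eval x = 0 ↔ ∃ i, x = ζ i) ∧
      ∀ k, ζ k ∈ Set.Ioo (t k.castSucc) (t k.succ) := by
  obtain ⟨ζ, hζ, hmem, hroot⟩ := exists_strictMono_zeros_of_mul_neg p.continuous ht hsign
  refine ⟨ζ, hζ, fun x => ?_, hmem⟩
  rw [eval_eq_leadingCoeff_mul_prod_sub hζ.injective hdeg hroot, mul_eq_zero, prod_eq_zero_iff]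
  simp [leadingCoeff_ne_zero.2 hp, sub_eq_zero]

theorem natDegree_and_leadingCoeff_linear_mul_add_C_mul {R : Type*} [CommRing R] [IsDomain R]
    {a b d : R} (ha : a ≠ 0) {p q : R[X]} {n : ℕ} (hp : p.natDegree = n + 1)
    (hq : q.natDegree ≤ n) :
    ((C a * X + C b) * p + C d * q).natDegree = n + 2 ∧
      ((C a * X + C b) * p + C d * q).leadingCoeff = a * p.leadingCoeff := by
  have hp₀ : p ≠ 0 := by rintro rfl; simp at hp
  have hL₀ : C a * X + C b ≠ 0 :=
    ne_zero_of_natDegree_gt (n := 0) (by rw [natDegree_linear ha]; norm_num)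
  have hLp : ((C a * X + C b) * p).natDegree = n + 2 := by
    rw [natDegree_mul hL₀ hp₀, natDegree_linear ha, hp]; ring
  have hlt : (C d * q).natDegree < ((C a * X + C b) * p).natDegree :=
    (natDegree_C_mul_le d q).trans_lt (by omega)
  refine ⟨(natDegree_add_eq_left_of_natDegree_lt hlt).trans hLp, ?_⟩
  rw [leadingCoeff_add_of_degree_lt' (degree_lt_degree hlt), leadingCoeff_mul,
    leadingCoeff_linear ha]

theorem neg_one_pow_sub_mul_eval_cons_snoc_pos {m : ℕ} {p r : ℝ[X]} {d α β : ℝ} (hd : d < 0)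
    (hdeg : p.natDegree = m) (hlc : 0 < p.leadingCoeff)
    (hα : p.eval α * r.eval α > 0) (hβ : p.eval β * r.eval β > 0)
    {ξ : Fin (m + 1) → ℝ} {η : Fin m → ℝ} (hξ : StrictMono ξ) (hη : StrictMono η)
    (hroot : ∀ i, p.IsRoot (η i)) (hrξ : ∀ j, r.eval (ξ j) = d * p.eval (ξ j))
    (hξmem : ∀ i, ξ i ∈ Set.Ioo α β) (hitl : ∀ i : Fin m, ξ i.castSucc < η i ∧ η i < ξ i.succ)
    (k : Fin (m + 3)) :
    0 < (-1) ^ (m + 2 - k : ℕ) * r.eval ((Fin.cons α (Fin.snoc ξ β) : Fin (m + 3) → ℝ) k) := by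
  induction k using Fin.cases with
  | zero =>
    have hαη : ∀ i, α < η i := fun i => (hξmem _).1.trans (hitl i).1
    have hpα := neg_one_pow_card_mul_eval_pos hη.injective hdeg hlc hroot fun i => (hαη i).ne
    simp only [hαη, filter_true, card_univ, Fintype.card_fin] at hpα
    simpa [pow_add] using pos_mul_of_pos_mul_of_pos_mul hpα hα
  | succ k =>
    induction k using Fin.lastCases with
    | last =>
      have hηβ : ∀ i, η i < β := fun i => (hitl i).2.trans (hξmem _).2
      have hpβ := neg_one_pow_card_mul_eval_pos hη.injective hdeg hlc hroot fun i => (hηβ i).ne'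
      simp only [(hηβ _).not_gt, filter_false, card_empty, pow_zero] at hpβ
      simpa using pos_mul_of_pos_mul_of_pos_mul hpβ hβ
    | cast j =>
      have hpξ := neg_one_pow_sub_mul_eval_pos_of_interlace hdeg hlc hη hroot hξ hitl j
      rw [Fin.cons_succ, Fin.snoc_castSucc, hrξ, Fin.val_succ, Fin.val_castSucc,
        show m + 2 - (j + 1) = m - j + 1 by omega, pow_succ]
      nlinarith

end Polynomial

theorem natDegree_eq_and_leadingCoeff_pos_of_recurrence {a b d : ℝ} (ha : 0 < a)
    {W : ℕ → ℝ[X]} (hW0 : W 0 = 1) (hW1 : W 1 = X)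
    (hrec : ∀ n, 2 ≤ n → W n = (C a * X + C b) * W (n - 1) + C d * W (n - 2)) (n : ℕ) :
    (W n).natDegree = n ∧ 0 < (W n).leadingCoeff := by
  induction n using Nat.twoStepInduction with
  | zero => simp [hW0]
  | one => simp [hW1]
  | more n ih₀ ih₁ =>
    obtain ⟨hdeg, hlc⟩ :=
      natDegree_and_leadingCoeff_linear_mul_add_C_mul ha.ne' (b := b) (d := d) ih₁.1 ih₀.1.le
    rw [hrec (n + 2) (by omega), Nat.add_sub_cancel, show n + 2 - 1 = n + 1 by omega]
    exact ⟨hdeg, hlc ▸ mul_pos ha ih₁.2⟩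

theorem stmt5_general (a b d : ℝ) (ha : 0 < a) (hd : d < 0)
    (W : ℕ → Polynomial ℝ)
    (hW0 : W 0 = 1) (hW1 : W 1 = X)
    (hrec : ∀ n, 2 ≤ n → W n = (C a * X + C b) * W (n - 1) + C d * W (n - 2))
    (m : ℕ) (α β : ℝ)
    (hWα : (W m).eval α * (W (m + 2)).eval α > 0)
    (hWβ : (W m).eval β * (W (m + 2)).eval β > 0)
    (ξ : Fin (m + 1) → ℝ) (η : Fin m → ℝ)
    (hξmono : StrictMono ξ) (hηmono : StrictMono η)
    (hξroots : ∀ x : ℝ, (W (m + 1)).eval x = 0 ↔ ∃ i, x = ξ i)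
    (hηroots : ∀ x : ℝ, (W m).eval x = 0 ↔ ∃ i, x = η i)
    (hξmem : ∀ i, ξ i ∈ Set.Ioo α β)
    (hitl : ∀ i : Fin m, ξ i.castSucc < η i ∧ η i < ξ i.succ) :
    ∃ ζ : Fin (m + 2) → ℝ, StrictMono ζ ∧
      (∀ x : ℝ, (W (m + 2)).eval x = 0 ↔ ∃ i, x = ζ i) ∧
      (∀ i, ζ i ∈ Set.Ioo α β) ∧
      (∀ i : Fin (m + 1), ζ i.castSucc < ξ i ∧ ξ i < ζ i.succ) := by
  obtain ⟨hdeg, hlc⟩ := natDegree_eq_and_leadingCoeff_pos_of_recurrence ha hW0 hW1 hrec m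
  obtain ⟨hdeg₂, hlc₂⟩ := natDegree_eq_and_leadingCoeff_pos_of_recurrence ha hW0 hW1 hrec (m + 2)
  have hξ : ∀ j, (W (m + 2)).eval (ξ j) = d * (W m).eval (ξ j) := fun j => by
    simp [hrec (m + 2) (by omega), (hξroots _).2 ⟨j, rfl⟩]
  have hsign := neg_one_pow_sub_mul_eval_cons_snoc_pos hd hdeg hlc hWα hWβ hξmono hηmono
    (fun i => (hηroots _).2 ⟨i, rfl⟩) hξ hξmem hitl
  have ht : StrictMono (Fin.cons α (Fin.snoc ξ β) : Fin (m + 3) → ℝ) := by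
    refine Fin.strictMono_cons.2
      ⟨fun j => ?_, Fin.strictMono_snoc.2 ⟨hξmono, fun i => (hξmem i).2⟩⟩
    induction j using Fin.lastCases with
    | last => simpa using (hξmem 0).1.trans (hξmem 0).2
    | cast i => simpa using (hξmem i).1
  obtain ⟨ζ, hζ, hroots, hmem⟩ := exists_strictMono_roots_of_mul_neg
    (leadingCoeff_ne_zero.1 hlc₂.ne') hdeg₂ ht (mul_neg_of_neg_one_pow_sub_mul_pos hsign)
  refine ⟨ζ, hζ, hroots, fun i => ⟨?_, ?_⟩, fun i => ⟨?_, ?_⟩⟩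
  · calc α < ζ 0 := by simpa using (hmem 0).1
      _ ≤ ζ i := hζ.monotone (Fin.zero_le i)
  · calc ζ i ≤ ζ (Fin.last _) := hζ.monotone (Fin.le_last i)
      _ < β := by simpa using (hmem (Fin.last _)).2
  · simpa using (hmem i.castSucc).2
  · simpa [← Fin.succ_castSucc] using (hmem i.succ).1

theorem stmt5 (a b d : ℝ) (ha : 0 < a) (hb : 0 ≤ b) (hd : d < 0)
    (W : ℕ → Polynomial ℝ)
    (hW0 : W 0 = 1) (hW1 : W 1 = X)
    (hrec : ∀ n, 2 ≤ n → W n = (C a * X + C b) * W (n - 1) + C d * W (n - 2))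
    (m : ℕ) (α β : ℝ) (hαβ : α < β)
    (hWα : (W m).eval α * (W (m + 2)).eval α > 0)
    (hWβ : (W m).eval β * (W (m + 2)).eval β > 0)
    (ξ : Fin (m + 1) → ℝ) (η : Fin m → ℝ)
    (hξmono : StrictMono ξ) (hηmono : StrictMono η)
    (hξroots : ∀ x : ℝ, (W (m + 1)).eval x = 0 ↔ ∃ i, x = ξ i)
    (hηroots : ∀ x : ℝ, (W m).eval x = 0 ↔ ∃ i, x = η i)
    (hξmem : ∀ i, ξ i ∈ Set.Ioo α β)
    (hitl : ∀ i : Fin m, ξ i.castSucc < η i ∧ η i < ξ i.succ) :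
    ∃ ζ : Fin (m + 2) → ℝ, StrictMono ζ ∧
      (∀ x : ℝ, (W (m + 2)).eval x = 0 ↔ ∃ i, x = ζ i) ∧
      (∀ i, ζ i ∈ Set.Ioo α β) ∧
      (∀ i : Fin (m + 1), ζ i.castSucc < ξ i ∧ ξ i < ζ i.succ) :=
  stmt5_general a b d ha hd W hW0 hW1 hrec m α β hWα hWβ ξ η hξmono hηmono hξroots hηroots hξmem
    hitl
end

section
/- Let a > 0, b ≥ 0, d < 0, and set f(x) = (2−a)x − b, x_Δ^± = (−b ± 2√(−d))/a. Suppose f(x_Δ^+) < 0 (equivalently b > (2−a)√(−d)). Then: (1) if a ≠ 1 the discriminant b² − 4d(a−1) is positive, so x_g^± = (−b ± √(b²−4d(a−1)))/(2(a−1)) are real (and for a = 1 one has b ≠ 0 so x_g^± := −d/b is defined); (2) x_g^+ > x_Δ^+; and (3) if additionally f(x_Δ^−) > 0, then x_g^− < x_Δ^−. -/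
/-!
With `f x = (2 - a) * x - b` and `g x = (1 - a) * x ^ 2 - b * x - d` one has the identity
`4 * g x = f x ^ 2 - ((a * x + b) ^ 2 + 4 * d)`, and `x_Δ^±` are exactly the points where
`(a * x + b) ^ 2 = -4 * d`. So `g (x_Δ^±) = f (x_Δ^±) ^ 2 / 4 > 0` whenever `f (x_Δ^±) ≠ 0`, and the
comparison with the roots of `g` is read off the sign of its leading coefficient `1 - a`.
-/

lemma between_roots_of_quadratic_neg {c e f x : ℝ} (hc : 0 < c)
    (hx : c * (x * x) + e * x + f < 0) :
    (-e - √(discrim c e f)) / (2 * c) < x ∧ x < (-e + √(discrim c e f)) / (2 * c) := by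
  have hsq : (2 * c * x + e) ^ 2 < discrim c e f := by
    rw [discrim]; nlinarith
  have habs : |2 * c * x + e| < √(discrim c e f) :=
    (Real.lt_sqrt (abs_nonneg _)).2 (by rwa [sq_abs])
  obtain ⟨hlo, hhi⟩ := abs_lt.1 habs
  constructor
  · rw [div_lt_iff₀ (by positivity)]; linarith
  · rw [lt_div_iff₀ (by positivity)]; linarith

lemma lt_root_of_quadratic_neg_of_neg {c e f x : ℝ} (hc : c < 0)
    (hx : c * (x * x) + e * x + f < 0) (hderiv : 0 < 2 * c * x + e) :
    x < (-e + √(discrim c e f)) / (2 * c) := by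
  have hsq : discrim c e f < (2 * c * x + e) ^ 2 := by
    rw [discrim]; nlinarith
  have hsqrt : √(discrim c e f) < 2 * c * x + e := (Real.sqrt_lt' hderiv).2 hsq
  rw [lt_div_iff_of_neg (by linarith)]
  linarith

section Tangency

variable {a b d x : ℝ}

lemma mul_sub_eq_of_mul_add_eq {r : ℝ} (hx : a * x + b = 2 * r) :
    a * ((2 - a) * x - b) = 2 * ((2 - a) * r - b) := by
  linear_combination (2 - a) * hx

lemma lt_of_sub_neg_of_mul_add_eq {r : ℝ} (ha : 0 < a) (hx : a * x + b = 2 * r)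
    (hf : (2 - a) * x - b < 0) : (2 - a) * r < b := by
  have := mul_neg_of_pos_of_neg ha hf
  rw [mul_sub_eq_of_mul_add_eq hx] at this
  linarith

lemma lt_of_sub_pos_of_mul_add_eq {r : ℝ} (ha : 0 < a) (hx : a * x + b = 2 * r)
    (hf : 0 < (2 - a) * x - b) : b < (2 - a) * r := by
  have := mul_pos ha hf
  rw [mul_sub_eq_of_mul_add_eq hx] at this
  linarith

lemma two_mul_sub_one_mul_add_pos {s : ℝ} (ha : 0 < a) (ha1 : a < 1) (hs : 0 < s)
    (hx : a * x + b = 2 * s) (hbs : (2 - a) * s < b) : 0 < 2 * (a - 1) * x + b := by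
  have hax : a * (2 * (a - 1) * x + b) = (2 - a) * b - 4 * (1 - a) * s := by
    linear_combination 2 * (a - 1) * hx
  -- `(2 - a) * b > (2 - a) ^ 2 * s = (4 * (1 - a) + a ^ 2) * s`
  nlinarith [mul_pos (mul_pos ha ha) hs, mul_pos (show 0 < 2 - a by linarith) hs]

lemma quadratic_neg_of_sq_eq (hx : (a * x + b) ^ 2 = -4 * d) (hf : (2 - a) * x - b ≠ 0) :
    (a - 1) * (x * x) + b * x + d < 0 := by
  have hid : 4 * ((a - 1) * (x * x) + b * x + d) = -((2 - a) * x - b) ^ 2 := by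
    linear_combination hx
  have := pow_pos (sq_pos_of_ne_zero hf) 1
  linarith

end Tangency

lemma discrim_pos_of_lt {a b d : ℝ} (ha : 0 < a) (ha1 : a ≠ 1) (hd : d < 0)
    (hbs : (2 - a) * √(-d) < b) : 0 < b ^ 2 - 4 * d * (a - 1) := by
  have hs : 0 < √(-d) := Real.sqrt_pos.2 (neg_pos.2 hd)
  have hs2 : √(-d) ^ 2 = -d := Real.sq_sqrt (neg_nonneg.2 hd.le)
  rcases lt_or_gt_of_ne ha1 with hlt | hgt
  · -- `b ^ 2 > (2 - a) ^ 2 * (-d) = (4 * (1 - a) + a ^ 2) * (-d)`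
    have h2a : 0 < (2 - a) * √(-d) := mul_pos (by linarith) hs
    nlinarith [mul_pos (mul_pos ha ha) (mul_pos hs hs)]
  · nlinarith [sq_nonneg b]

open Classical in
theorem stmt11_general (a b d : ℝ) (ha : 0 < a) (hd : d < 0)
    (hf : (2 - a) * ((-b + 2 * Real.sqrt (-d)) / a) - b < 0) :
    ((a ≠ 1 → 0 < b ^ 2 - 4 * d * (a - 1)) ∧ (a = 1 → b ≠ 0)) ∧
    (let xgp := if a = 1 then -d / b
      else (-b + Real.sqrt (b ^ 2 - 4 * d * (a - 1))) / (2 * (a - 1))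
     let xgm := if a = 1 then -d / b
      else (-b - Real.sqrt (b ^ 2 - 4 * d * (a - 1))) / (2 * (a - 1))
     ((-b + 2 * Real.sqrt (-d)) / a < xgp ∧
      (0 < (2 - a) * ((-b - 2 * Real.sqrt (-d)) / a) - b →
        xgm < (-b - 2 * Real.sqrt (-d)) / a))) := by
  have hd0 : 0 < -d := neg_pos.2 hd
  set s := √(-d)
  have hs : 0 < s := Real.sqrt_pos.2 hd0
  have hs2 : s ^ 2 = -d := Real.sq_sqrt hd0.le
  set t := (-b + 2 * s) / a with ht
  set u := (-b - 2 * s) / a with hu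
  have hat : a * t + b = 2 * s := by rw [ht]; field_simp; ring
  have hau : a * u + b = 2 * -s := by rw [hu]; field_simp; ring
  have hbs : (2 - a) * s < b := lt_of_sub_neg_of_mul_add_eq ha hat hf
  have hqt : (a - 1) * (t * t) + b * t + d < 0 :=
    quadratic_neg_of_sq_eq (by rw [hat]; linear_combination 4 * hs2) hf.ne
  have hΔ : b ^ 2 - 4 * d * (a - 1) = discrim (a - 1) b d := by rw [discrim]; ring
  dsimp only
  refine ⟨⟨fun ha1 => discrim_pos_of_lt ha ha1 hd hbs, fun ha1 => ?_⟩, ?_, fun hfu => ?_⟩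
  · subst ha1
    linarith
  · split_ifs with ha1
    · subst ha1
      rw [lt_div_iff₀ (by linarith)]
      linarith
    rw [hΔ]
    rcases lt_or_gt_of_ne ha1 with hlt | hgt
    · exact lt_root_of_quadratic_neg_of_neg (by linarith) hqt
        (two_mul_sub_one_mul_add_pos ha hlt hs hat hbs)
    · exact (between_roots_of_quadratic_neg (by linarith) hqt).2
  · have ha2 : 2 < a := by
      have h2s : 0 < (a - 2) * s := by
        linarith [lt_of_sub_pos_of_mul_add_eq ha hau hfu]
      linarith [pos_of_mul_pos_left h2s hs.le]
    have hqu : (a - 1) * (u * u) + b * u + d < 0 :=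
      quadratic_neg_of_sq_eq (by rw [hau]; linear_combination 4 * hs2) hfu.ne'
    rw [if_neg (by linarith), hΔ]
    exact (between_roots_of_quadratic_neg (by linarith) hqu).1

open Classical in
theorem stmt11 (a b d : ℝ) (ha : 0 < a) (hb : 0 ≤ b) (hd : d < 0)
    (hf : (2 - a) * ((-b + 2 * Real.sqrt (-d)) / a) - b < 0) :
    ((a ≠ 1 → 0 < b ^ 2 - 4 * d * (a - 1)) ∧ (a = 1 → b ≠ 0)) ∧
    (let xgp := if a = 1 then -d / b
      else (-b + Real.sqrt (b ^ 2 - 4 * d * (a - 1))) / (2 * (a - 1))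
     let xgm := if a = 1 then -d / b
      else (-b - Real.sqrt (b ^ 2 - 4 * d * (a - 1))) / (2 * (a - 1))
     ((-b + 2 * Real.sqrt (-d)) / a < xgp ∧
      (0 < (2 - a) * ((-b - 2 * Real.sqrt (-d)) / a) - b →
        xgm < (-b - 2 * Real.sqrt (-d)) / a))) :=
  stmt11_general a b d ha hd hf
end

section
/- Let a > 0, b ≥ 0, d < 0 with f(x_Δ^+) < 0 where f(x) = (2−a)x − b and x_Δ^+ = (−b + 2√(−d))/a, and let x_g^+ be the root of g(x) = (1−a)x² − bx − d specified by x_g^+ = (−b + √(b²−4d(a−1)))/(2(a−1)) for a ≠ 1 and x_g^+ = −d/b for a = 1 (b ≠ 0). Then f(x) < 0 for every x in the open interval (x_Δ^+, x_g^+). -/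
set_option maxHeartbeats 1000000


open Classical in
theorem stmt12 (a b d : ℝ) (ha : 0 < a) (hb : 0 ≤ b) (hd : d < 0)
    (hf : (2 - a) * ((-b + 2 * Real.sqrt (-d)) / a) - b < 0) :
    let xΔp := (-b + 2 * Real.sqrt (-d)) / a
    let xgp := if a = 1 then -d / b
      else (-b + Real.sqrt (b ^ 2 - 4 * d * (a - 1))) / (2 * (a - 1))
    ∀ x ∈ Set.Ioo xΔp xgp, (2 - a) * x - b < 0 := by
  intro xΔp xgp x hx
  obtain ⟨hx1, hx2⟩ := hx
  set s := Real.sqrt (-d) with hs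
  have hs0 : 0 < s := Real.sqrt_pos.mpr (by linarith)
  have hs2 : s ^ 2 = -d := Real.sq_sqrt (by linarith)
  -- from hf : (2-a) * s < b
  have hΔ : (2 - a) * xΔp < b := by linarith
  have hkey : (2 - a) * s < b := by
    have : (2 - a) * ((-b + 2 * s) / a) < b := hΔ
    rw [← mul_div_assoc, div_lt_iff₀ ha] at this
    nlinarith
  by_cases hca : 2 - a ≤ 0
  · nlinarith [mul_le_mul_of_nonpos_left (le_of_lt hx1) hca]
  · push_neg at hca
    have hb' : 0 < b := lt_of_le_of_lt (by positivity) hkey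
    have hxgp : (2 - a) * xgp ≤ b := by
      show (2 - a) * (if a = 1 then -d / b
        else (-b + Real.sqrt (b ^ 2 - 4 * d * (a - 1))) / (2 * (a - 1))) ≤ b
      split_ifs with h1
      · subst h1
        rw [← mul_div_assoc, div_le_iff₀ hb']
        nlinarith
      · have hdisc : 0 ≤ b ^ 2 - 4 * d * (a - 1) := by nlinarith [mul_pos hca hs0, sq_nonneg (a * s)]
        set t := Real.sqrt (b ^ 2 - 4 * d * (a - 1)) with hts
        have ht0 : 0 ≤ t := Real.sqrt_nonneg _
        have ht2 : t ^ 2 = b ^ 2 - 4 * d * (a - 1) := Real.sq_sqrt hdisc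
        rcases lt_or_gt_of_ne h1 with hlt | hgt
        · -- a < 1, denominator negative
          have hden : 2 * (a - 1) < 0 := by linarith
          rw [← mul_div_assoc, div_le_iff_of_neg hden]
          -- need b * (2*(a-1)) ≤ (2-a)*(-b+t), i.e. (2-a)*t ≥ a*b
          have hbs : (2 - a) * s * ((2 - a) * s) ≤ b * b := by
            nlinarith [mul_pos hca hs0]
          have hb2 : 0 ≤ b ^ 2 + d * (2 - a) ^ 2 := by nlinarith [hbs, hs2]
          have hsq : (a * b) ^ 2 ≤ ((2 - a) * t) ^ 2 := by
            nlinarith [ht2, mul_nonneg (by linarith : (0:ℝ) ≤ 1 - a) hb2]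
          have h2 : a * b ≤ (2 - a) * t := by
            have := Real.sqrt_le_sqrt hsq
            rwa [Real.sqrt_sq (by positivity), Real.sqrt_sq (mul_nonneg hca.le ht0)] at this
          nlinarith
        · -- a > 1, denominator positive
          have hden : 0 < 2 * (a - 1) := by linarith
          rw [← mul_div_assoc, div_le_iff₀ hden]
          have hbs : (2 - a) * s * ((2 - a) * s) ≤ b * b := by
            nlinarith [mul_pos hca hs0]
          have hb2 : 0 ≤ b ^ 2 + d * (2 - a) ^ 2 := by nlinarith [hbs, hs2]
          have hsq : ((2 - a) * t) ^ 2 ≤ (a * b) ^ 2 := by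
            nlinarith [ht2, mul_nonneg (by linarith : (0:ℝ) ≤ a - 1) hb2]
          have h2 : (2 - a) * t ≤ a * b := by
            have := Real.sqrt_le_sqrt hsq
            rwa [Real.sqrt_sq (mul_nonneg hca.le ht0), Real.sqrt_sq (by positivity)] at this
          nlinarith
    nlinarith [mul_lt_mul_of_pos_left hx2 hca]
end

section
/- Every polynomial W_n in a (1,0)-sequence (W_0 = 1, W_1 = x, W_n = (ax+b)W_{n-1} + d·W_{n-2}, a > 0, b ≥ 0, d < 0) has exactly n distinct real roots, and for every n ≥ 0 the zero-set R_{n+1} interlaces R_n: writing R_n = {ξ_{n,1} < ⋯ < ξ_{n,n}}, one has ξ_{n+1,1} < ξ_{n,1} < ξ_{n+1,2} < ξ_{n,2} < ⋯ < ξ_{n,n} < ξ_{n+1,n+1}. -/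
/-!
Induction on `n`, carrying the factorisation `W n = c * ∏ (X - ξ n j)` with `c > 0` together with
the interlacing of `ξ (n + 1)` and `ξ n`. At a root `η` of `W (n + 1)` the recurrence gives
`W (n + 2)(η) = d * W n (η)`; by interlacing, `W n` has sign `(-1) ^ (n - i)` at the `i`-th root of
`W (n + 1)`, so since `d < 0` the polynomial `W (n + 2)` alternates in sign along these roots and is
negative at the largest one. Having degree `n + 2` and positive leading coefficient, it is positive
far to the right and has sign `(-1) ^ n` far to the left, so the intermediate value theorem gives a
root in each of the `n + 2` gaps, and the degree bound says these are all of its roots.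
-/

open Polynomial Finset Filter

theorem neg_one_pow_mul_prod_sub_pos {R : Type*} [CommRing R] [LinearOrder R]
    [IsStrictOrderedRing R] {n k : ℕ} {u : Fin n → R} {t : R}
    (hlt : ∀ j : Fin n, (j : ℕ) < k → u j < t) (hgt : ∀ j : Fin n, k ≤ (j : ℕ) → t < u j) :
    0 < (-1) ^ (n - k) * ∏ j, (t - u j) := by
  classical
  have hcard : #{j : Fin n | ¬ (j : ℕ) < k} = n - k := by
    have := card_filter_add_card_filter_not (s := univ) (fun j : Fin n => (j : ℕ) < k)
    rw [Fin.card_filter_val_lt, card_univ, Fintype.card_fin] at this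
    omega
  rw [← prod_filter_mul_prod_filter_not univ (fun j : Fin n => (j : ℕ) < k), mul_left_comm, ← hcard,
    ← prod_neg]
  refine mul_pos (prod_pos fun j hj => ?_) (prod_pos fun j hj => ?_)
  · exact sub_pos.2 (hlt j (mem_filter.1 hj).2)
  · exact neg_pos.2 (sub_neg.2 (hgt j (not_lt.1 (mem_filter.1 hj).2)))

theorem mul_neg_of_neg_one_pow_mul_pos {R : Type*} [CommRing R] [LinearOrder R]
    [IsStrictOrderedRing R] {k : ℕ} {x y : R} (hx : 0 < (-1) ^ (k + 1) * x)
    (hy : 0 < (-1) ^ k * y) : x * y < 0 := by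
  rcases neg_one_pow_eq_or R k with h | h <;> simp only [pow_succ, h] at hx hy <;> nlinarith

theorem eq_C_leadingCoeff_mul_prod_X_sub_C {R : Type*} [CommRing R] [IsDomain R] {p : R[X]} {m : ℕ}
    {w : Fin m → R} (hw : Function.Injective w) (hroot : ∀ i, p.IsRoot (w i))
    (hdeg : p.natDegree = m) : p = C p.leadingCoeff * ∏ i, (X - C (w i)) := by
  classical
  rcases eq_or_ne p 0 with rfl | hp
  · simp
  have hle : univ.val.map w ≤ p.roots :=
    (Multiset.le_iff_subset (univ.nodup.map hw)).2 fun x hx => by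
      obtain ⟨i, -, rfl⟩ := Multiset.mem_map.1 hx
      exact (mem_roots hp).2 (hroot i)
  have hroots : p.roots = univ.val.map w :=
    (Multiset.eq_of_le_of_card_le hle (by simpa [hdeg] using p.card_roots')).symm
  conv_lhs => rw [← C_leadingCoeff_mul_prod_multiset_X_sub_C (p := p) (by rw [hroots, hdeg]; simp)]
  rw [hroots, Multiset.map_map]
  rfl

theorem exists_mem_Ioo_eval_eq_zero {p : ℝ[X]} {x y : ℝ} (hxy : x < y)
    (h : eval x p * eval y p < 0) : ∃ z ∈ Set.Ioo x y, p.IsRoot z := by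
  have hc : ContinuousOn (fun t => eval t p) (Set.Icc x y) := p.continuous.continuousOn
  rcases mul_neg_iff.1 h with ⟨hx, hy⟩ | ⟨hx, hy⟩
  · exact intermediate_value_Ioo' hxy.le hc ⟨hy, hx⟩
  · exact intermediate_value_Ioo hxy.le hc ⟨hx, hy⟩

theorem tendsto_neg_one_pow_mul_eval_atBot {p : ℝ[X]} (hdeg : 0 < p.degree)
    (hlc : 0 < p.leadingCoeff) :
    Tendsto (fun x => (-1) ^ p.natDegree * eval x p) atBot atTop := by
  set q := C ((-1) ^ p.natDegree) * p.comp (-X)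
  have hq : Tendsto (fun x => eval x q) atTop atTop := by
    apply tendsto_atTop_of_leadingCoeff_nonneg
    · simpa [q, degree_C_mul, natDegree_comp] using hdeg
    · simp [q, ← mul_assoc, ← mul_pow, hlc.le]
  convert hq.comp tendsto_neg_atBot_atTop using 2
  simp [q]

def Interlaces {α : Type*} [LT α] {n : ℕ} (η : Fin (n + 1) → α) (ξ : Fin n → α) : Prop :=
  ∀ i : Fin n, η i.castSucc < ξ i ∧ ξ i < η i.succ

theorem Interlaces.strictMono {α : Type*} [Preorder α] {n : ℕ} {η : Fin (n + 1) → α}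
    {ξ : Fin n → α} (h : Interlaces η ξ) : StrictMono ξ := by
  cases n with
  | zero => exact fun i => i.elim0
  | succ n =>
    refine Fin.strictMono_iff_lt_succ.2 fun i => (h i.castSucc).2.trans ?_
    rw [Fin.succ_castSucc]
    exact (h i.succ).1

def HasOrderedRoots {n : ℕ} (p : ℝ[X]) (ξ : Fin n → ℝ) : Prop :=
  StrictMono ξ ∧ ∃ c, 0 < c ∧ p = C c * ∏ j, (X - C (ξ j))

namespace HasOrderedRoots

variable {n : ℕ} {p : ℝ[X]} {ξ : Fin n → ℝ}

theorem eval_eq_zero_iff (h : HasOrderedRoots p ξ) (x : ℝ) : p.eval x = 0 ↔ ∃ i, x = ξ i := by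
  obtain ⟨-, c, hc, rfl⟩ := h
  simp [eval_prod, prod_eq_zero_iff, sub_eq_zero, hc.ne']

theorem unique {η : Fin n → ℝ} (hξ : HasOrderedRoots p ξ) (hη : HasOrderedRoots p η) : ξ = η := by
  refine (hξ.1.range_inj hη.1).1 (Set.ext fun x => ?_)
  simp only [Set.mem_range, eq_comm (b := x), ← hξ.eval_eq_zero_iff, ← hη.eval_eq_zero_iff]

theorem leadingCoeff_pos (h : HasOrderedRoots p ξ) : 0 < p.leadingCoeff := by
  obtain ⟨-, c, hc, rfl⟩ := h
  rwa [leadingCoeff_mul, leadingCoeff_C,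
    (monic_prod_of_monic _ _ fun j _ => monic_X_sub_C (ξ j)).leadingCoeff, mul_one]

theorem natDegree_eq (h : HasOrderedRoots p ξ) : p.natDegree = n := by
  obtain ⟨-, c, hc, rfl⟩ := h
  rw [natDegree_C_mul hc.ne', natDegree_prod_of_monic _ _ fun j _ => monic_X_sub_C (ξ j)]
  simp

theorem neg_one_pow_mul_eval_pos (h : HasOrderedRoots p ξ) {k : ℕ} {t : ℝ}
    (hlt : ∀ j : Fin n, (j : ℕ) < k → ξ j < t) (hgt : ∀ j : Fin n, k ≤ (j : ℕ) → t < ξ j) :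
    0 < (-1) ^ (n - k) * p.eval t := by
  obtain ⟨-, c, hc, rfl⟩ := h
  rw [eval_mul, eval_C, eval_prod, mul_left_comm]
  simpa using mul_pos hc (neg_one_pow_mul_prod_sub_pos hlt hgt)

theorem neg_one_pow_mul_eval_pos_of_interlaces (h : HasOrderedRoots p ξ) {η : Fin (n + 1) → ℝ}
    (hη : StrictMono η) (hηξ : Interlaces η ξ) (i : Fin (n + 1)) :
    0 < (-1) ^ (n - i) * p.eval (η i) := by
  refine h.neg_one_pow_mul_eval_pos (fun j hj => (hηξ j).2.trans_le (hη.monotone ?_))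
    (fun j hj => (hη.monotone ?_).trans_lt (hηξ j).1)
  · simpa [Fin.le_def] using hj
  · simpa [Fin.le_def] using hj

end HasOrderedRoots

theorem exists_interlaces_isRoot_of_sign_changes {m : ℕ} (p : ℝ[X]) {e : Fin (m + 1) → ℝ}
    (he : StrictMono e) (hchange : ∀ i : Fin m, eval (e i.castSucc) p * eval (e i.succ) p < 0) :
    ∃ w : Fin m → ℝ, Interlaces e w ∧ ∀ i, p.IsRoot (w i) := by
  choose w hw hroot using fun i : Fin m =>
    exists_mem_Ioo_eval_eq_zero (he (Fin.castSucc_lt_succ (i := i))) (hchange i)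
  exact ⟨w, hw, hroot⟩

theorem exists_hasOrderedRoots_interlaces {m : ℕ} {r : ℝ[X]} (hlc : 0 < r.leadingCoeff)
    (hdeg : r.natDegree = m + 2) {v : Fin (m + 1) → ℝ} (hv : StrictMono v)
    (hsign : ∀ i : Fin (m + 1), 0 < (-1) ^ (m + 1 - i) * eval (v i) r) :
    ∃ w, HasOrderedRoots r w ∧ Interlaces w v := by
  have hdeg' : 0 < r.degree := by
    rw [degree_eq_natDegree (leadingCoeff_ne_zero.1 hlc.ne'), hdeg]
    exact_mod_cast (m + 1).succ_pos
  obtain ⟨R, hR, hvR⟩ :=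
    (((tendsto_atTop_of_leadingCoeff_nonneg r hdeg' hlc.le).eventually_gt_atTop 0).and
      (eventually_gt_atTop (v (Fin.last m)))).exists
  obtain ⟨L, hL, hLv⟩ :=
    (((tendsto_neg_one_pow_mul_eval_atBot hdeg' hlc).eventually_gt_atTop 0).and
      (eventually_lt_atBot (v 0))).exists
  -- `L` and `R` continue the alternation of the signs of `r` along `v` by one point on each side.
  set e : Fin (m + 3) → ℝ := Fin.cons L (Fin.snoc v R) with he_def
  have hev (i : Fin (m + 1)) : e i.castSucc.succ = v i := by
    rw [he_def, Fin.cons_succ, Fin.snoc_castSucc]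
  have he : StrictMono e := by
    have hsnoc := (Fin.strictMono_insertNth_iff (Fin.last _) R v).2
      ⟨hv, fun i _ => (hv.monotone (Fin.le_last i)).trans_lt hvR, fun i hi => absurd hi (by simp)⟩
    rw [Fin.insertNth_last'] at hsnoc
    refine Fin.strictMono_cons.2 ⟨fun j => hLv.trans_le ?_, hsnoc⟩
    exact (hsnoc.monotone (Fin.zero_le j)).trans' (by simp)
  have hesign (k : Fin (m + 3)) : 0 < (-1) ^ (m + 2 - k) * eval (e k) r := by
    refine Fin.cases (by simpa [he_def, hdeg] using hL) (fun j => ?_) k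
    refine Fin.lastCases (by simpa [he_def] using hR) (fun i => ?_) j
    rw [hev, Fin.val_succ, Fin.val_castSucc, show m + 2 - (i + 1) = m + 1 - i by omega]
    exact hsign i
  obtain ⟨w, hew, hroot⟩ := exists_interlaces_isRoot_of_sign_changes r he fun i => by
    have h := hesign i.castSucc
    rw [Fin.val_castSucc, show m + 2 - i = m + 2 - (i + 1) + 1 by omega] at h
    exact mul_neg_of_neg_one_pow_mul_pos h (hesign i.succ)
  refine ⟨w, ⟨hew.strictMono, r.leadingCoeff, hlc,
    eq_C_leadingCoeff_mul_prod_X_sub_C hew.strictMono.injective hroot hdeg⟩, fun i => ⟨?_, ?_⟩⟩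
  · exact hev i ▸ (hew i.castSucc).2
  · exact hev i ▸ Fin.succ_castSucc i ▸ (hew i.succ).1

section Recurrence

variable {K : Type*} [Field K] {a b d : K} {p q : K[X]}

theorem degree_C_mul_lt_degree_linear_mul (ha : a ≠ 0) (hp : p ≠ 0)
    (hqp : q.natDegree ≤ p.natDegree) : (C d * q).degree < ((C a * X + C b) * p).degree := by
  rw [degree_mul (p := C a * X + C b), degree_linear ha, degree_eq_natDegree hp, ← smul_eq_C_mul]
  calc (d • q).degree ≤ q.natDegree := (degree_smul_le d q).trans degree_le_natDegree
    _ < 1 + p.natDegree := by exact_mod_cast Nat.lt_one_add_iff.2 hqp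

theorem natDegree_linear_mul_add (ha : a ≠ 0) (hp : p ≠ 0) (hqp : q.natDegree ≤ p.natDegree) :
    ((C a * X + C b) * p + C d * q).natDegree = p.natDegree + 1 := by
  have hlin : C a * X + C b ≠ 0 := ne_zero_of_degree_gt (n := 0) (by rw [degree_linear ha]; simp)
  rw [natDegree_add_eq_left_of_degree_lt (degree_C_mul_lt_degree_linear_mul ha hp hqp),
    natDegree_mul hlin hp, natDegree_linear ha, add_comm]

theorem leadingCoeff_linear_mul_add (ha : a ≠ 0) (hp : p ≠ 0) (hqp : q.natDegree ≤ p.natDegree) :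
    ((C a * X + C b) * p + C d * q).leadingCoeff = a * p.leadingCoeff := by
  rw [leadingCoeff_add_of_degree_lt' (degree_C_mul_lt_degree_linear_mul ha hp hqp),
    leadingCoeff_mul, leadingCoeff_linear ha]

end Recurrence

theorem HasOrderedRoots.linear_mul_add {n : ℕ} {p q : ℝ[X]} {u : Fin n → ℝ}
    {v : Fin (n + 1) → ℝ} (hq : HasOrderedRoots q u) (hp : HasOrderedRoots p v)
    (hvu : Interlaces v u) {a b d : ℝ} (ha : 0 < a) (hd : d < 0) :
    ∃ w, HasOrderedRoots ((C a * X + C b) * p + C d * q) w ∧ Interlaces w v := by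
  have hp0 : p ≠ 0 := leadingCoeff_ne_zero.1 hp.leadingCoeff_pos.ne'
  have hqp : q.natDegree ≤ p.natDegree := by rw [hq.natDegree_eq, hp.natDegree_eq]; omega
  refine exists_hasOrderedRoots_interlaces ?_ ?_ hp.1 fun i => ?_
  · rw [leadingCoeff_linear_mul_add ha.ne' hp0 hqp]
    exact mul_pos ha hp.leadingCoeff_pos
  · rw [natDegree_linear_mul_add ha.ne' hp0 hqp, hp.natDegree_eq]
  · have hpv : p.eval (v i) = 0 := (hp.eval_eq_zero_iff _).2 ⟨i, rfl⟩
    have hqv := hq.neg_one_pow_mul_eval_pos_of_interlaces hp.1 hvu i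
    rw [eval_add, eval_mul, hpv, mul_zero, zero_add, eval_mul, eval_C,
      show n + 1 - (i : ℕ) = n - i + 1 by omega, pow_succ]
    linarith [mul_pos (neg_pos.2 hd) hqv]

theorem stmt13_general (a b d : ℝ) (ha : 0 < a) (hd : d < 0)
    (W : ℕ → Polynomial ℝ)
    (hW0 : W 0 = 1) (hW1 : W 1 = X)
    (hrec : ∀ n, 2 ≤ n → W n = (C a * X + C b) * W (n - 1) + C d * W (n - 2)) :
    ∃ ξ : (n : ℕ) → Fin n → ℝ,
      (∀ n, StrictMono (ξ n)) ∧
      (∀ n, ∀ x : ℝ, (W n).eval x = 0 ↔ ∃ i, x = ξ n i) ∧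
      (∀ n, ∀ i : Fin n, ξ (n + 1) i.castSucc < ξ n i ∧ ξ n i < ξ (n + 1) i.succ) := by
  have hpair (n : ℕ) : ∃ (u : Fin n → ℝ) (v : Fin (n + 1) → ℝ),
      HasOrderedRoots (W n) u ∧ HasOrderedRoots (W (n + 1)) v ∧ Interlaces v u := by
    induction n with
    | zero =>
      refine ⟨![], ![0], ⟨Subsingleton.strictMono _, 1, one_pos, by simp [hW0]⟩,
        ⟨strictMono_vecEmpty, 1, one_pos, by simp [hW1]⟩, finZeroElim⟩
    | succ n ih =>
      obtain ⟨u, v, hu, hv, hvu⟩ := ih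
      obtain ⟨w, hw, hwv⟩ := hu.linear_mul_add hv hvu (b := b) ha hd
      exact ⟨v, w, hv, hrec (n + 2) (by omega) ▸ hw, hwv⟩
  choose ξ hξ using fun n => (hpair n).imp fun _ ⟨_, h, _⟩ => h
  refine ⟨ξ, fun n => (hξ n).1, fun n => (hξ n).eval_eq_zero_iff, fun n => ?_⟩
  obtain ⟨u, v, hu, hv, hvu⟩ := hpair n
  rwa [(hξ n).unique hu, (hξ (n + 1)).unique hv]

theorem stmt13 (a b d : ℝ) (ha : 0 < a) (hb : 0 ≤ b) (hd : d < 0)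
    (W : ℕ → Polynomial ℝ)
    (hW0 : W 0 = 1) (hW1 : W 1 = X)
    (hrec : ∀ n, 2 ≤ n → W n = (C a * X + C b) * W (n - 1) + C d * W (n - 2)) :
    ∃ ξ : (n : ℕ) → Fin n → ℝ,
      (∀ n, StrictMono (ξ n)) ∧
      (∀ n, ∀ x : ℝ, (W n).eval x = 0 ↔ ∃ i, x = ξ n i) ∧
      (∀ n, ∀ i : Fin n, ξ (n + 1) i.castSucc < ξ n i ∧ ξ n i < ξ (n + 1) i.succ) :=
  stmt13_general a b d ha hd W hW0 hW1 hrec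
end

section
/- Let θ ∈ ℝ with θ ∉ πℚ. Then for any positive integers M and N, and any nonempty open interval I ⊂ (0, 2π), there exist positive integers m and q with m > N such that pv((m+j)qθ) ∈ I for all j ∈ {1, …, M}; i.e., M consecutive terms of the arithmetic progression (m+j)qθ all have principal values in I. -/
open Real

noncomputable def pv (θ : ℝ) : ℝ := θ - 2 * π * ⌊θ / (2 * π)⌋

/-!
Write `qθ = 2πp + g`. By Dirichlet's theorem applied to `θ / 2π`, which is irrational, there is
`q ≥ 1` making `g` nonzero and shorter than `(v - u) / (M + 1)`. Then `(m + j) q θ ≡ (m + j) g`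
modulo `2π`, and an arithmetic progression whose step `g` is this short cannot jump over
`(u, v)`: taking `m` so that `(m + 1) g` is the first term past `2πk + u`, the next `M` terms
stay below `2πk + v` (for `g < 0` the picture is mirrored).
-/

lemma pv_eq_sub_int_mul_of_mem_Ico {x : ℝ} (k : ℤ) (h : x - k * (2 * π) ∈ Set.Ico 0 (2 * π)) :
    pv x = x - k * (2 * π) := by
  have hπ : 0 < 2 * π := two_pi_pos
  have hfloor : ⌊x / (2 * π)⌋ = k := by
    rw [Int.floor_eq_iff, le_div_iff₀ hπ, div_lt_iff₀ hπ]
    constructor <;> linarith [h.1, h.2]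
  rw [pv, hfloor]
  ring

lemma irrational_div_two_pi {θ : ℝ} (hθ : ¬∃ r : ℚ, θ = r * π) : Irrational (θ / (2 * π)) := by
  rintro ⟨r, hr⟩
  refine hθ ⟨2 * r, ?_⟩
  rw [eq_div_iff two_pi_pos.ne'] at hr
  push_cast
  linarith

lemma exists_nat_mul_sub_int_mul_ne_zero_abs_lt {θ c ε : ℝ} (hc : 0 < c)
    (hθ : Irrational (θ / c)) (hε : 0 < ε) :
    ∃ q : ℕ, 0 < q ∧ ∃ p : ℤ, q * θ - p * c ≠ 0 ∧ |q * θ - p * c| < ε := by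
  obtain ⟨n, hn⟩ := exists_nat_one_div_lt (div_pos hε hc)
  obtain ⟨q, hq, -, hdir⟩ := Real.exists_nat_abs_mul_sub_round_le (θ / c) n.succ_pos
  have hscale : q * θ - round (q * (θ / c)) * c = c * (q * (θ / c) - round (q * (θ / c))) := by
    field_simp
  refine ⟨q, hq, round (q * (θ / c)), ?_, ?_⟩
  · rw [hscale]
    exact mul_ne_zero hc.ne' (sub_ne_zero.mpr ((hθ.natCast_mul hq.ne').ne_int _))
  · have hn' : 1 / ((n.succ : ℕ) + 1 : ℝ) < 1 / (n + 1) := by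
      apply one_div_lt_one_div_of_lt (by positivity)
      push_cast
      linarith
    rw [hscale, abs_mul, abs_of_pos hc, ← lt_div_iff₀' hc]
    linarith

lemma exists_arith_prog_sub_int_mul_mem_Ioo {g c a b : ℝ} {M : ℕ} (hg : g ≠ 0) (hc : 0 < c)
    (hgab : M * |g| < b - a) (N : ℕ) :
    ∃ m : ℕ, N < m ∧ ∃ k : ℤ,
      ∀ j ∈ Finset.Icc 1 M, ((m + j : ℕ) : ℝ) * g - k * c ∈ Set.Ioo a b := by
  wlog hpos : 0 < g generalizing g a b
  · have hneg : 0 < -g := neg_pos.mpr ((not_lt.mp hpos).lt_of_ne hg)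
    obtain ⟨m, hm, k, hk⟩ := this (a := -b) (b := -a) (neg_ne_zero.mpr hg) (by rw [abs_neg]; linarith) hneg
    refine ⟨m, hm, -k, fun j hj => ?_⟩
    obtain ⟨h1, h2⟩ := hk j hj
    push_cast at h1 h2 ⊢
    constructor <;> linarith
  rw [abs_of_pos hpos] at hgab
  obtain ⟨k, hk⟩ := exists_nat_gt (((N + 1) * g - a) / c)
  rw [div_lt_iff₀ hc] at hk
  have hstart : (N + 1 : ℝ) ≤ (k * c + a) / g := by
    rw [le_div_iff₀ hpos]
    linarith
  set m := ⌊(k * c + a) / g⌋₊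
  have hm_le : (m : ℝ) * g ≤ k * c + a := by
    rw [← le_div_iff₀ hpos]
    exact Nat.floor_le (by linarith [hstart])
  have hm_lt : k * c + a < (m + 1) * g := by
    rw [← div_lt_iff₀ hpos]
    exact Nat.lt_floor_add_one _
  refine ⟨m, Nat.lt_of_succ_le (Nat.le_floor (by exact_mod_cast hstart)), k, fun j hj => ?_⟩
  obtain ⟨hj1, hjM⟩ := Finset.mem_Icc.mp hj
  have hj1' : (1 : ℝ) ≤ j := by exact_mod_cast hj1
  have hjM' : (j : ℝ) ≤ M := by exact_mod_cast hjM
  push_cast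
  constructor <;> nlinarith

theorem stmt17_general (θ : ℝ) (hθ : ¬∃ r : ℚ, θ = r * π) (M N : ℕ) :
    ∀ u v : ℝ, 0 ≤ u → u < v → v ≤ 2 * π →
      ∃ m q : ℕ, N < m ∧ 0 < q ∧
        ∀ j ∈ Finset.Icc 1 M, pv (((m + j) * q : ℕ) * θ) ∈ Set.Ioo u v := by
  intro u v hu huv hv
  obtain ⟨q, hq, p, hg, hg_lt⟩ := exists_nat_mul_sub_int_mul_ne_zero_abs_lt two_pi_pos
    (irrational_div_two_pi hθ) (div_pos (sub_pos.mpr huv) (M.cast_add_one_pos (α := ℝ)))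
  set g := q * θ - p * (2 * π)
  have hMg : M * |g| < v - u := by
    rw [lt_div_iff₀ M.cast_add_one_pos] at hg_lt
    nlinarith [abs_nonneg g]
  obtain ⟨m, hm, k, hk⟩ := exists_arith_prog_sub_int_mul_mem_Ioo hg two_pi_pos hMg N
  refine ⟨m, q, hm, hq, fun j hj => ?_⟩
  have hshift : (((m + j) * q : ℕ) : ℝ) * θ - (k + (m + j) * p : ℤ) * (2 * π)
      = ((m + j : ℕ) : ℝ) * g - k * (2 * π) := by
    push_cast
    ring
  have hmem := hk j hj
  rw [← hshift] at hmem
  rw [pv_eq_sub_int_mul_of_mem_Ico _ ⟨hu.trans hmem.1.le, hmem.2.trans_le hv⟩]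
  exact hmem

theorem stmt17 (θ : ℝ) (hθ : ¬∃ r : ℚ, θ = r * π) (M N : ℕ) (hM : 0 < M) (hN : 0 < N) :
    ∀ u v : ℝ, 0 ≤ u → u < v → v ≤ 2 * π →
      ∃ m q : ℕ, N < m ∧ 0 < q ∧
        ∀ j ∈ Finset.Icc 1 M, pv (((m + j) * q : ℕ) * θ) ∈ Set.Ioo u v :=
  stmt17_general θ hθ M N
end
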